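/- Suppose the two balls of the bouncing-ball system have equal positive masses (so that at a ball–ball collision they exchange velocities) and that f belongs to the class 𝒞. Then there exists a motion of the system such that lim_{i→∞} |v⁽¹⁾ᵢ| = lim_{i→∞} |v⁽²⁾ᵢ| = ∞, where v⁽²⁾ᵢ denotes the velocity of the lower ball P₂ just after its i-th collision with the plate and v⁽¹⁾ᵢ denotes the velocity of the upper ball P₁ just after its i-th collision with P₂. -/

import Mathlib

open Filter Topology

/-- A motion of the one-dimensional system of two bouncing balls `P₁` (upper,
mass `m₁`) and `P₂` (lower, mass `m₂`) above a plate oscillating with height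
`f(t)`, in constant gravity `g`.  `x₁, x₂` are the positions, `v₁, v₂` the
velocities, and `coll` the (discrete) set of collision times.  Between
collisions the balls are in free fall; at a plate collision `P₂` reflects by
`v₂⁺ = −v₂⁻ + 2 f'(t)`; at a ball–ball collision the elastic collision law
with `α = (m₁−m₂)/(m₁+m₂)` holds; triple collisions are excluded. -/
structure BouncingBallMotion (g : ℝ) (f : ℝ → ℝ) (m₁ m₂ : ℝ) where
  x₁ : ℝ → ℝ
  x₂ : ℝ → ℝ
  v₁ : ℝ → ℝ
  v₂ : ℝ → ℝ
  coll : Set ℝ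
  cont₁ : ContinuousOn x₁ (Set.Ici 0)
  cont₂ : ContinuousOn x₂ (Set.Ici 0)
  order : ∀ t ∈ Set.Ici (0 : ℝ), f t ≤ x₂ t ∧ x₂ t ≤ x₁ t
  coll_sub : coll ⊆ Set.Ici 0
  coll_discrete : ∀ t : ℝ, ∃ ε > (0 : ℝ), ∀ s ∈ coll, |s - t| < ε → s = t
  freefall₁ : ∀ t ∈ Set.Ici (0 : ℝ) \ coll,
    HasDerivAt x₁ (v₁ t) t ∧ HasDerivAt v₁ (-g) t
  freefall₂ : ∀ t ∈ Set.Ici (0 : ℝ) \ coll,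
    HasDerivAt x₂ (v₂ t) t ∧ HasDerivAt v₂ (-g) t
  contact_mem_coll : ∀ t ∈ Set.Ici (0 : ℝ), x₂ t = f t ∨ x₁ t = x₂ t → t ∈ coll
  coll_is_contact : ∀ t ∈ coll, x₂ t = f t ∨ x₁ t = x₂ t
  no_triple : ∀ t ∈ coll, ¬(x₂ t = f t ∧ x₁ t = x₂ t)
  plate_law : ∀ t ∈ coll, 0 < t → x₂ t = f t →
    (∃ a b : ℝ, Tendsto v₂ (𝓝[<] t) (𝓝 a) ∧ Tendsto v₂ (𝓝[>] t) (𝓝 b) ∧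
      b = -a + 2 * deriv f t) ∧
    (∃ a : ℝ, Tendsto v₁ (𝓝[<] t) (𝓝 a) ∧ Tendsto v₁ (𝓝[>] t) (𝓝 a))
  ball_law : ∀ t ∈ coll, 0 < t → x₁ t = x₂ t →
    ∃ a₁ a₂ b₁ b₂ : ℝ,
      Tendsto v₁ (𝓝[<] t) (𝓝 a₁) ∧ Tendsto v₂ (𝓝[<] t) (𝓝 a₂) ∧
      Tendsto v₁ (𝓝[>] t) (𝓝 b₁) ∧ Tendsto v₂ (𝓝[>] t) (𝓝 b₂) ∧
      b₁ = (m₁ - m₂) / (m₁ + m₂) * a₁ + (1 - (m₁ - m₂) / (m₁ + m₂)) * a₂ ∧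
      b₂ = (1 + (m₁ - m₂) / (m₁ + m₂)) * a₁ - (m₁ - m₂) / (m₁ + m₂) * a₂

/-!
Balls of equal mass exchange their velocities when they collide, so the pair moves like two balls
that pass through each other: the upper ball is the higher and the lower ball the lower of the two.
A ball leaving the plate at a time `t` with `f'(t) = K T g / 2` gains the speed `K T g`, so its
next flight is longer by `2 K T`; it lands again at a time congruent to `t` modulo `T`, and its
flight times grow linearly. We let the two balls bounce on two such interleaved schedules `A`
and `B`. Flights longer than `4 L / g`, `L` a Lipschitz constant of `f`, stay above the plate,
and between two consecutive bounces the balls meet exactly once. The velocities after the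
bounces grow with the flight times; after a meeting the upper ball has the velocity of the ball
with the longer flight, and by energy conservation its square exceeds `(g / 2) ^ 2` times the
difference of the squared flight times, which grows linearly as well.
-/

lemma Function.Periodic.deriv {f : ℝ → ℝ} {c : ℝ} (h : Periodic f c) : Periodic (deriv f) c :=
  fun x => by rw [← deriv_comp_add_const, h.funext]

lemma Function.Periodic.exists_lipschitzWith {f : ℝ → ℝ} {T : ℝ} (hf : ContDiff ℝ 1 f)
    (hper : Periodic f T) (hT : T ≠ 0) : ∃ L, LipschitzWith L f := by
  obtain ⟨C, hC⟩ :=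
    (hper.deriv.isBounded_of_continuous hT (hf.continuous_deriv le_rfl)).exists_norm_le
  refine ⟨C.toNNReal, lipschitzWith_of_nnnorm_deriv_le (hf.differentiable one_ne_zero) fun x => ?_⟩
  rw [← NNReal.coe_le_coe, coe_nnnorm]
  exact (hC _ ⟨x, rfl⟩).trans (Real.le_coe_toNNReal C)

open Set Filter Topology Function

namespace BouncingBall

/-- A free flight from time `l` to time `r`, leaving and landing at height `H`, has height
`H + g / 2 * arc l r t`. -/
def arc (l r t : ℝ) : ℝ := (t - l) * (r - t)

lemma arc_sub_arc (l r l' r' t : ℝ) :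
    arc l r t - arc l' r' t = (l + r - l' - r') * t - (l * r - l' * r') := by
  unfold arc; ring

lemma sq_add_sub_two_mul (l r t : ℝ) : (l + r - 2 * t) ^ 2 = (r - l) ^ 2 - 4 * arc l r t := by
  unfold arc; ring

lemma arc_lt_arc_of_nested {l r l' r' t : ℝ} (hl : l' ≤ l) (hr : r < r') (hlt : l < t)
    (htr : t ≤ r) : arc l r t < arc l' r' t := by
  unfold arc
  nlinarith [mul_le_mul_of_nonneg_right (sub_le_sub_left hl t) (sub_nonneg.2 htr)]

/-- The time at which the flights over `[l, r]` and `[l', r']` are at the same height. -/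
noncomputable def crossTime (l r l' r' : ℝ) : ℝ := (l * r - l' * r') / (l + r - l' - r')

section Crossing

variable {l r l' r' : ℝ}

-- The difference of the two arcs is affine, negative at `l` and positive at `r'`.
lemma slope_pos_of_staggered (h₁ : l' < l) (h₂ : l < r') (h₃ : r' < r) :
    0 < l + r - l' - r' := by
  have hl : arc l r l - arc l' r' l < 0 := by unfold arc; nlinarith
  have hr : 0 < arc l r r' - arc l' r' r' := by unfold arc; nlinarith
  rw [arc_sub_arc] at hl hr
  nlinarith

lemma arc_sub_arc_eq_mul_sub_crossTime (h₁ : l' < l) (h₂ : l < r') (h₃ : r' < r) (t : ℝ) :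
    arc l r t - arc l' r' t = (l + r - l' - r') * (t - crossTime l r l' r') := by
  have hs := (slope_pos_of_staggered h₁ h₂ h₃).ne'
  rw [arc_sub_arc, crossTime, mul_sub, mul_div_cancel₀ _ hs]

lemma crossTime_mem_Ioo (h₁ : l' < l) (h₂ : l < r') (h₃ : r' < r) :
    crossTime l r l' r' ∈ Ioo l r' := by
  have hs := slope_pos_of_staggered h₁ h₂ h₃
  have hl := arc_sub_arc_eq_mul_sub_crossTime h₁ h₂ h₃ l
  have hr := arc_sub_arc_eq_mul_sub_crossTime h₁ h₂ h₃ r'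
  simp only [arc] at hl hr
  constructor <;> nlinarith

lemma arc_crossTime (h₁ : l' < l) (h₂ : l < r') (h₃ : r' < r) :
    arc l r (crossTime l r l' r') = arc l' r' (crossTime l r l' r') := by
  rw [← sub_eq_zero, arc_sub_arc_eq_mul_sub_crossTime h₁ h₂ h₃, sub_self, mul_zero]

/-- Energy conservation: `g / 2 * (l + r - 2 * t)` is the velocity on the flight `[l, r]`, and at
the crossing time both balls are at the same height. -/
lemma sq_sub_sq_le_sq_crossTime (h₁ : l' < l) (h₂ : l < r') (h₃ : r' < r) :
    (r - l) ^ 2 - (r' - l') ^ 2 ≤ (l + r - 2 * crossTime l r l' r') ^ 2 := by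
  have h := arc_crossTime h₁ h₂ h₃
  rw [← sub_nonneg, sq_add_sub_two_mul, h]
  nlinarith [sq_nonneg (l' + r' - 2 * crossTime l r l' r'),
    sq_add_sub_two_mul l' r' (crossTime l r l' r')]

end Crossing

/-- The flight `(e j, e (j + 1)]` containing `t`. -/
noncomputable def flightIndex (e : ℕ → ℝ) (t : ℝ) : ℕ := sInf {j | t ≤ e (j + 1)}

/-- Height of a ball that bounces at the times `e j`, always at height `H`. -/
noncomputable def bounceHeight (g H : ℝ) (e : ℕ → ℝ) (t : ℝ) : ℝ :=
  H + g / 2 * arc (e (flightIndex e t)) (e (flightIndex e t + 1)) t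

noncomputable def bounceVelocity (g : ℝ) (e : ℕ → ℝ) (t : ℝ) : ℝ :=
  g / 2 * (e (flightIndex e t) + e (flightIndex e t + 1) - 2 * t)

lemma hasDerivAt_flight (g H l r t : ℝ) :
    HasDerivAt (fun s => H + g / 2 * arc l r s) (g / 2 * (l + r - 2 * t)) t := by
  have h := (((hasDerivAt_id' t).sub_const l).mul ((hasDerivAt_id' t).const_sub r))
    |>.const_mul (g / 2) |>.const_add H
  exact h.congr_deriv (by ring)

lemma hasDerivAt_flightVelocity (g l r t : ℝ) :
    HasDerivAt (fun s => g / 2 * (l + r - 2 * s)) (-g) t := by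
  have h := ((hasDerivAt_id' t).const_mul 2 |>.const_sub (l + r)).const_mul (g / 2)
  exact h.congr_deriv (by ring)

section Flights

variable {g H : ℝ} {e : ℕ → ℝ} {t : ℝ} {j : ℕ}

lemma flightIndex_eq (he : StrictMono e) (ht : t ∈ Ioc (e j) (e (j + 1))) :
    flightIndex e t = j := by
  refine le_antisymm (Nat.sInf_le ht.2) (le_csInf ⟨j, ht.2⟩ fun k hk => ?_)
  by_contra! hkj
  exact (ht.1.trans_le hk).not_ge (he.monotone hkj)

lemma bounceHeight_apply (he : StrictMono e) (j : ℕ) : bounceHeight g H e (e j) = H := by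
  cases j with
  | zero =>
    have h0 : flightIndex e (e 0) = 0 := Nat.sInf_eq_zero.2 (Or.inl (he.monotone (Nat.zero_le 1)))
    simp [bounceHeight, h0, arc]
  | succ k =>
    simp [bounceHeight, flightIndex_eq he ⟨he (Nat.lt_succ_self k), le_rfl⟩, arc]

lemma bounceHeight_eq (he : StrictMono e) (ht : t ∈ Icc (e j) (e (j + 1))) :
    bounceHeight g H e t = H + g / 2 * arc (e j) (e (j + 1)) t := by
  rcases ht.1.eq_or_lt with rfl | hlt
  · simp [bounceHeight_apply he, arc]
  · rw [bounceHeight, flightIndex_eq he ⟨hlt, ht.2⟩]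

lemma bounceVelocity_eq (he : StrictMono e) (ht : t ∈ Ioc (e j) (e (j + 1))) :
    bounceVelocity g e t = g / 2 * (e j + e (j + 1) - 2 * t) := by
  rw [bounceVelocity, flightIndex_eq he ht]

lemma bounceHeight_eventuallyEq (he : StrictMono e) (ht : t ∈ Ioo (e j) (e (j + 1))) :
    bounceHeight g H e =ᶠ[𝓝 t] fun s => H + g / 2 * arc (e j) (e (j + 1)) s := by
  filter_upwards [Ioo_mem_nhds ht.1 ht.2] with s hs
  exact bounceHeight_eq he (Ioo_subset_Icc_self hs)

lemma bounceVelocity_eventuallyEq (he : StrictMono e) (ht : t ∈ Ioo (e j) (e (j + 1))) :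
    bounceVelocity g e =ᶠ[𝓝 t] fun s => g / 2 * (e j + e (j + 1) - 2 * s) := by
  filter_upwards [Ioo_mem_nhds ht.1 ht.2] with s hs
  exact bounceVelocity_eq he (Ioo_subset_Ioc_self hs)

lemma hasDerivAt_bounceHeight (he : StrictMono e) (ht : t ∈ Ioo (e j) (e (j + 1))) :
    HasDerivAt (bounceHeight g H e) (bounceVelocity g e t) t := by
  rw [(bounceHeight_eventuallyEq he ht).hasDerivAt_iff,
    bounceVelocity_eq he (Ioo_subset_Ioc_self ht)]
  exact hasDerivAt_flight g H _ _ t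

lemma hasDerivAt_bounceVelocity (he : StrictMono e) (ht : t ∈ Ioo (e j) (e (j + 1))) :
    HasDerivAt (bounceVelocity g e) (-g) t := by
  rw [(bounceVelocity_eventuallyEq he ht).hasDerivAt_iff]
  exact hasDerivAt_flightVelocity g _ _ t

lemma continuousAt_bounceVelocity (he : StrictMono e) (ht : t ∈ Ioo (e j) (e (j + 1))) :
    ContinuousAt (bounceVelocity g e) t :=
  (hasDerivAt_bounceVelocity he ht).continuousAt

lemma tendsto_bounceVelocity_nhdsGT (he : StrictMono e) (j : ℕ) :
    Tendsto (bounceVelocity g e) (𝓝[>] (e j)) (𝓝 (g / 2 * (e (j + 1) - e j))) := by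
  have hlim : Tendsto (fun s => g / 2 * (e j + e (j + 1) - 2 * s)) (𝓝[>] (e j))
      (𝓝 (g / 2 * (e (j + 1) - e j))) := by
    have hc : Continuous fun s : ℝ => g / 2 * (e j + e (j + 1) - 2 * s) := by fun_prop
    convert (hc.tendsto (e j)).mono_left nhdsWithin_le_nhds using 2
    ring
  refine hlim.congr' ?_
  filter_upwards [Ioo_mem_nhdsGT_of_mem ⟨le_rfl, he (Nat.lt_succ_self j)⟩] with s hs
  exact (bounceVelocity_eq he (Ioo_subset_Ioc_self hs)).symm

lemma tendsto_bounceVelocity_nhdsLT (he : StrictMono e) (j : ℕ) :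
    Tendsto (bounceVelocity g e) (𝓝[<] (e (j + 1))) (𝓝 (-(g / 2 * (e (j + 1) - e j)))) := by
  have hlim : Tendsto (fun s => g / 2 * (e j + e (j + 1) - 2 * s)) (𝓝[<] (e (j + 1)))
      (𝓝 (-(g / 2 * (e (j + 1) - e j)))) := by
    have hc : Continuous fun s : ℝ => g / 2 * (e j + e (j + 1) - 2 * s) := by fun_prop
    convert (hc.tendsto (e (j + 1))).mono_left nhdsWithin_le_nhds using 2
    ring
  refine hlim.congr' ?_
  filter_upwards [Ioo_mem_nhdsLT_of_mem ⟨he (Nat.lt_succ_self j), le_rfl⟩] with s hs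
  exact (bounceVelocity_eq he (Ioo_subset_Ioc_self hs)).symm

lemma continuousOn_bounceHeight_Icc (he : StrictMono e) (j : ℕ) :
    ContinuousOn (bounceHeight g H e) (Icc (e j) (e (j + 1))) :=
  (show Continuous fun s => H + g / 2 * arc (e j) (e (j + 1)) s by unfold arc; fun_prop)
    |>.continuousOn.congr fun _ ht => bounceHeight_eq he ht

variable {f : ℝ → ℝ} {L : NNReal}

-- Near `l`, `g / 2 * arc l r t ≥ g (r - l) / 4 * (t - l) > L (t - l) ≥ f t - H`; likewise near `r`.
lemma lt_flight_of_lipschitzWith (hg : 0 < g) (hf : LipschitzWith L f) {l r : ℝ} (hl : f l = H)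
    (hr : f r = H) (hgap : 4 * L < g * (r - l)) (ht : t ∈ Ioo l r) :
    f t < H + g / 2 * arc l r t := by
  have hL : f t - H ≤ L * (t - l) := by
    have h := hf.dist_le_mul t l
    rw [Real.dist_eq, Real.dist_eq, hl, abs_of_pos (sub_pos.2 ht.1)] at h
    exact (le_abs_self _).trans h
  have hR : f t - H ≤ L * (r - t) := by
    have h := hf.dist_le_mul t r
    rw [Real.dist_eq, Real.dist_eq, hr, abs_sub_comm t r, abs_of_pos (sub_pos.2 ht.2)] at h
    exact (le_abs_self _).trans h
  unfold arc
  rcases le_total (t - l) (r - t) with h | h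
  · nlinarith [mul_pos (sub_pos.2 ht.1) (show 0 < g * (r - t) / 2 - L by nlinarith)]
  · nlinarith [mul_pos (sub_pos.2 ht.2) (show 0 < g * (t - l) / 2 - L by nlinarith)]

section Unbounded

variable (he : StrictMono e) (he' : Tendsto e atTop atTop)
include he he'

lemma continuousAt_bounceHeight (h0 : e 0 < t) : ContinuousAt (bounceHeight g H e) t := by
  obtain ⟨j, hj, hj'⟩ := he.exists_between_of_tendsto_atTop he' h0
  have hcont : ContinuousOn (bounceHeight g H e) (Icc (e j) (e (j + 2))) := by
    rw [← Icc_union_Icc_eq_Icc (he.monotone (Nat.le_succ j)) (he.monotone (Nat.le_succ (j + 1)))]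
    exact (continuousOn_bounceHeight_Icc he j).union_of_isClosed
      (continuousOn_bounceHeight_Icc he (j + 1)) isClosed_Icc isClosed_Icc
  exact hcont.continuousAt (Icc_mem_nhds hj (hj'.trans_lt (he (Nat.lt_succ_self _))))

lemma exists_mem_Ioo_of_notMem_range (h0 : e 0 < t) (ht : t ∉ range e) :
    ∃ j, t ∈ Ioo (e j) (e (j + 1)) := by
  obtain ⟨j, hj, hj'⟩ := he.exists_between_of_tendsto_atTop he' h0
  exact ⟨j, hj, hj'.lt_of_ne fun h => ht ⟨_, h.symm⟩⟩

end Unbounded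

end Flights

section AbovePlate

variable {g H : ℝ} {e : ℕ → ℝ} {t : ℝ} {f : ℝ → ℝ} {L : NNReal}
variable (hg : 0 < g) (he : StrictMono e) (hf : LipschitzWith L f) (hfe : ∀ j, f (e j) = H)
  (hgap : ∀ j, 4 * L < g * (e (j + 1) - e j))
include hg he hf hfe hgap

lemma lt_bounceHeight_of_mem_Ioo {j : ℕ} (ht : t ∈ Ioo (e j) (e (j + 1))) :
    f t < bounceHeight g H e t := by
  rw [bounceHeight_eq he (Ioo_subset_Icc_self ht)]
  exact lt_flight_of_lipschitzWith hg hf (hfe j) (hfe (j + 1)) (hgap j) ht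

variable (he' : Tendsto e atTop atTop) (h0 : e 0 < t)
include he' h0

lemma lt_bounceHeight (ht : t ∉ range e) : f t < bounceHeight g H e t := by
  obtain ⟨j, hj⟩ := exists_mem_Ioo_of_notMem_range he he' h0 ht
  exact lt_bounceHeight_of_mem_Ioo hg he hf hfe hgap hj

lemma le_bounceHeight : f t ≤ bounceHeight g H e t := by
  by_cases ht : t ∈ range e
  · obtain ⟨j, rfl⟩ := ht
    rw [bounceHeight_apply he, hfe]
  · exact (lt_bounceHeight hg he hf hfe hgap he' h0 ht).le

end AbovePlate

/-- Velocity of the upper of two balls at heights `y`, `z` with velocities `u`, `w`. -/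
noncomputable def upperVel (y z u w : ℝ → ℝ) (t : ℝ) : ℝ := if y t < z t then w t else u t

noncomputable def lowerVel (y z u w : ℝ → ℝ) (t : ℝ) : ℝ := if y t < z t then u t else w t

section Sorted

variable {y z u w : ℝ → ℝ} {l : Filter ℝ}

lemma max_eventuallyEq_of_lt (h : ∀ᶠ s in l, y s < z s) : (fun s => max (y s) (z s)) =ᶠ[l] z :=
  h.mono fun _ hs => max_eq_right hs.le

lemma min_eventuallyEq_of_lt (h : ∀ᶠ s in l, y s < z s) : (fun s => min (y s) (z s)) =ᶠ[l] y :=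
  h.mono fun _ hs => min_eq_left hs.le

lemma upperVel_eventuallyEq_of_lt (h : ∀ᶠ s in l, y s < z s) : upperVel y z u w =ᶠ[l] w :=
  h.mono fun _ hs => if_pos hs

lemma lowerVel_eventuallyEq_of_lt (h : ∀ᶠ s in l, y s < z s) : lowerVel y z u w =ᶠ[l] u :=
  h.mono fun _ hs => if_pos hs

lemma max_eventuallyEq_of_gt (h : ∀ᶠ s in l, z s < y s) : (fun s => max (y s) (z s)) =ᶠ[l] y :=
  h.mono fun _ hs => max_eq_left hs.le

lemma min_eventuallyEq_of_gt (h : ∀ᶠ s in l, z s < y s) : (fun s => min (y s) (z s)) =ᶠ[l] z :=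
  h.mono fun _ hs => min_eq_right hs.le

lemma upperVel_eventuallyEq_of_gt (h : ∀ᶠ s in l, z s < y s) : upperVel y z u w =ᶠ[l] u :=
  h.mono fun _ hs => if_neg hs.not_gt

lemma lowerVel_eventuallyEq_of_gt (h : ∀ᶠ s in l, z s < y s) : lowerVel y z u w =ᶠ[l] w :=
  h.mono fun _ hs => if_neg hs.not_gt

lemma hasDerivAt_sorted {t a : ℝ} (hne : y t ≠ z t) (hy : HasDerivAt y (u t) t)
    (hz : HasDerivAt z (w t) t) (hu : HasDerivAt u a t) (hw : HasDerivAt w a t) :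
    (HasDerivAt (fun s => max (y s) (z s)) (upperVel y z u w t) t ∧
      HasDerivAt (upperVel y z u w) a t) ∧
    (HasDerivAt (fun s => min (y s) (z s)) (lowerVel y z u w t) t ∧
      HasDerivAt (lowerVel y z u w) a t) := by
  rcases hne.lt_or_gt with h | h
  · have hev := hy.continuousAt.eventually_lt hz.continuousAt h
    rw [(upperVel_eventuallyEq_of_lt hev).eq_of_nhds, (lowerVel_eventuallyEq_of_lt hev).eq_of_nhds]
    exact ⟨⟨hz.congr_of_eventuallyEq (max_eventuallyEq_of_lt hev),
        hw.congr_of_eventuallyEq (upperVel_eventuallyEq_of_lt hev)⟩,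
      hy.congr_of_eventuallyEq (min_eventuallyEq_of_lt hev),
        hu.congr_of_eventuallyEq (lowerVel_eventuallyEq_of_lt hev)⟩
  · have hev := hz.continuousAt.eventually_lt hy.continuousAt h
    rw [(upperVel_eventuallyEq_of_gt hev).eq_of_nhds, (lowerVel_eventuallyEq_of_gt hev).eq_of_nhds]
    exact ⟨⟨hy.congr_of_eventuallyEq (max_eventuallyEq_of_gt hev),
        hu.congr_of_eventuallyEq (upperVel_eventuallyEq_of_gt hev)⟩,
      hz.congr_of_eventuallyEq (min_eventuallyEq_of_gt hev),
        hw.congr_of_eventuallyEq (lowerVel_eventuallyEq_of_gt hev)⟩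

variable {c : ℝ}

lemma tendsto_sorted_of_lt_of_gt (hl : ∀ᶠ s in 𝓝[<] c, y s < z s)
    (hr : ∀ᶠ s in 𝓝[>] c, z s < y s) (hu : ContinuousAt u c) (hw : ContinuousAt w c) :
    Tendsto (upperVel y z u w) (𝓝[<] c) (𝓝 (w c)) ∧ Tendsto (lowerVel y z u w) (𝓝[<] c) (𝓝 (u c)) ∧
      Tendsto (upperVel y z u w) (𝓝[>] c) (𝓝 (u c)) ∧
      Tendsto (lowerVel y z u w) (𝓝[>] c) (𝓝 (w c)) :=
  ⟨(hw.tendsto.mono_left nhdsWithin_le_nhds).congr' (upperVel_eventuallyEq_of_lt hl).symm,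
    (hu.tendsto.mono_left nhdsWithin_le_nhds).congr' (lowerVel_eventuallyEq_of_lt hl).symm,
    (hu.tendsto.mono_left nhdsWithin_le_nhds).congr' (upperVel_eventuallyEq_of_gt hr).symm,
    (hw.tendsto.mono_left nhdsWithin_le_nhds).congr' (lowerVel_eventuallyEq_of_gt hr).symm⟩

lemma tendsto_sorted_of_gt_of_lt (hl : ∀ᶠ s in 𝓝[<] c, z s < y s)
    (hr : ∀ᶠ s in 𝓝[>] c, y s < z s) (hu : ContinuousAt u c) (hw : ContinuousAt w c) :
    Tendsto (upperVel y z u w) (𝓝[<] c) (𝓝 (u c)) ∧ Tendsto (lowerVel y z u w) (𝓝[<] c) (𝓝 (w c)) ∧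
      Tendsto (upperVel y z u w) (𝓝[>] c) (𝓝 (w c)) ∧
      Tendsto (lowerVel y z u w) (𝓝[>] c) (𝓝 (u c)) :=
  ⟨(hu.tendsto.mono_left nhdsWithin_le_nhds).congr' (upperVel_eventuallyEq_of_gt hl).symm,
    (hw.tendsto.mono_left nhdsWithin_le_nhds).congr' (lowerVel_eventuallyEq_of_gt hl).symm,
    (hw.tendsto.mono_left nhdsWithin_le_nhds).congr' (upperVel_eventuallyEq_of_lt hr).symm,
    (hu.tendsto.mono_left nhdsWithin_le_nhds).congr' (lowerVel_eventuallyEq_of_lt hr).symm⟩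

end Sorted

section CollisionLaws

variable {v₁ v₂ : ℝ → ℝ} {t : ℝ}

lemma plate_law_of_eventuallyEq {g D : ℝ} {e : ℕ → ℝ} {j : ℕ} (he : StrictMono e)
    (hv₂ : v₂ =ᶠ[𝓝 (e (j + 1))] bounceVelocity g e) (hv₁ : ContinuousAt v₁ (e (j + 1)))
    (hD : g / 2 * (e (j + 2) - e (j + 1)) = g / 2 * (e (j + 1) - e j) + 2 * D) :
    (∃ a b : ℝ, Tendsto v₂ (𝓝[<] (e (j + 1))) (𝓝 a) ∧ Tendsto v₂ (𝓝[>] (e (j + 1))) (𝓝 b) ∧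
      b = -a + 2 * D) ∧
    (∃ a : ℝ, Tendsto v₁ (𝓝[<] (e (j + 1))) (𝓝 a) ∧ Tendsto v₁ (𝓝[>] (e (j + 1))) (𝓝 a)) :=
  ⟨⟨_, _, (tendsto_bounceVelocity_nhdsLT he j).congr' (hv₂.filter_mono nhdsWithin_le_nhds).symm,
      (tendsto_bounceVelocity_nhdsGT he (j + 1)).congr' (hv₂.filter_mono nhdsWithin_le_nhds).symm,
      by rw [hD]; ring⟩,
    _, hv₁.tendsto.mono_left nhdsWithin_le_nhds, hv₁.tendsto.mono_left nhdsWithin_le_nhds⟩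

lemma ball_law_of_exchange (m : ℝ) {a b : ℝ} (hl₁ : Tendsto v₁ (𝓝[<] t) (𝓝 a))
    (hl₂ : Tendsto v₂ (𝓝[<] t) (𝓝 b)) (hr₁ : Tendsto v₁ (𝓝[>] t) (𝓝 b))
    (hr₂ : Tendsto v₂ (𝓝[>] t) (𝓝 a)) :
    ∃ a₁ a₂ b₁ b₂ : ℝ,
      Tendsto v₁ (𝓝[<] t) (𝓝 a₁) ∧ Tendsto v₂ (𝓝[<] t) (𝓝 a₂) ∧
      Tendsto v₁ (𝓝[>] t) (𝓝 b₁) ∧ Tendsto v₂ (𝓝[>] t) (𝓝 b₂) ∧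
      b₁ = (m - m) / (m + m) * a₁ + (1 - (m - m) / (m + m)) * a₂ ∧
      b₂ = (1 + (m - m) / (m + m)) * a₁ - (m - m) / (m + m) * a₂ :=
  ⟨a, b, b, a, hl₁, hl₂, hr₁, hr₂, by simp, by simp⟩

end CollisionLaws

def interleave {α : Type*} (a b : ℕ → α) (n : ℕ) : α := if n % 2 = 0 then a (n / 2) else b (n / 2)

section Interleave

variable {α β : Type*} {a b : ℕ → α}

@[simp] lemma interleave_two_mul (i : ℕ) : interleave a b (2 * i) = a i := by
  simp [interleave]

@[simp] lemma interleave_two_mul_add_one (i : ℕ) : interleave a b (2 * i + 1) = b i := by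
  simp [interleave, Nat.add_mod, Nat.add_div]

lemma comp_interleave (φ : α → β) : φ ∘ interleave a b = interleave (φ ∘ a) (φ ∘ b) := by
  ext n; simp only [comp_apply, interleave, apply_ite φ]

lemma range_interleave : range (interleave a b) = range a ∪ range b := by
  ext x
  constructor
  · rintro ⟨n, rfl⟩
    obtain ⟨i, rfl | rfl⟩ := Nat.even_or_odd' n
    · exact Or.inl ⟨i, (interleave_two_mul i).symm⟩
    · exact Or.inr ⟨i, (interleave_two_mul_add_one i).symm⟩
  · rintro (⟨i, rfl⟩ | ⟨i, rfl⟩)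
    · exact ⟨2 * i, interleave_two_mul i⟩
    · exact ⟨2 * i + 1, interleave_two_mul_add_one i⟩

lemma interleave_strictMono [Preorder α] (hab : ∀ i, a i < b i) (hba : ∀ i, b i < a (i + 1)) :
    StrictMono (interleave a b) := by
  refine strictMono_nat_of_lt_succ fun n => ?_
  obtain ⟨i, rfl | rfl⟩ := Nat.even_or_odd' n
  · simpa using hab i
  · simpa [show 2 * i + 1 + 1 = 2 * (i + 1) by ring] using hba i

lemma tendsto_interleave {l : Filter α} (ha : Tendsto a atTop l) (hb : Tendsto b atTop l) :
    Tendsto (interleave a b) atTop l := by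
  refine fun s hs => mem_map.2 ?_
  have hdiv : Tendsto (fun n : ℕ => n / 2) atTop atTop := Nat.tendsto_div_const_atTop two_ne_zero
  filter_upwards [hdiv.eventually ((ha.eventually_mem hs).and (hb.eventually_mem hs))] with n hn
  simp only [mem_preimage, interleave]
  split_ifs
  exacts [hn.1, hn.2]

end Interleave

lemma exists_pos_forall_eq_of_subset_range {S : Set ℝ} {E : ℕ → ℝ} (hE : Tendsto E atTop atTop)
    (hS : S ⊆ range E) (t : ℝ) : ∃ ε > 0, ∀ s ∈ S, |s - t| < ε → s = t := by
  have hfin : {i | ¬ t + 1 < E i}.Finite :=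
    Filter.eventually_cofinite.1 (Nat.cofinite_eq_atTop ▸ hE.eventually_gt_atTop (t + 1))
  have hnhds : (E '' {i | ¬ t + 1 < E i} \ {t})ᶜ ∈ 𝓝 t :=
    ((hfin.image E).sdiff.isClosed.isOpen_compl).mem_nhds fun h => h.2 rfl
  obtain ⟨ε, hε, hball⟩ := Metric.mem_nhds_iff.1 hnhds
  refine ⟨min ε 1, lt_min hε one_pos, fun s hs hst => ?_⟩
  obtain ⟨i, rfl⟩ := hS hs
  by_contra hne
  have hnear : ¬ t + 1 < E i := fun h => by
    have := (le_abs_self _).trans_lt (hst.trans_le (min_le_right _ _)); linarith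
  exact hball (Metric.mem_ball.2 ((Real.dist_eq _ _).trans_lt (hst.trans_le (min_le_left _ _))))
    ⟨⟨i, hnear, rfl⟩, hne⟩

lemma strictMono_and_tendsto_of_le_succ_sub {e : ℕ → ℝ} {δ : ℝ} (hδ : 0 < δ)
    (h : ∀ j, δ ≤ e (j + 1) - e j) : StrictMono e ∧ Tendsto e atTop atTop := by
  refine ⟨strictMono_nat_of_lt_succ fun j => by linarith [h j], ?_⟩
  have hlin : ∀ j : ℕ, e 0 + j * δ ≤ e j := by
    intro j
    induction j with
    | zero => simp
    | succ j ih => push_cast; linarith [h j]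
  exact tendsto_atTop_mono hlin
    (tendsto_atTop_add_const_left _ _ (tendsto_natCast_atTop_atTop.atTop_mul_const hδ))

lemma tendsto_abs_of_mul_le_sq {x : ℕ → ℝ} {C : ℝ} (hC : 0 < C) (h : ∀ i, C * i ≤ x i ^ 2) :
    Tendsto (fun i => |x i|) atTop atTop := by
  refine tendsto_atTop_mono (fun i => ?_)
    (Real.tendsto_sqrt_atTop.comp (tendsto_natCast_atTop_atTop.const_mul_atTop hC))
  rw [comp_apply, ← Real.sqrt_sq_eq_abs]
  exact Real.sqrt_le_sqrt (h i)

section Staggered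

variable {g H t : ℝ} {e e' : ℕ → ℝ} {j k : ℕ}
variable (he : StrictMono e) (he' : StrictMono e') (h₁ : e' k < e j) (h₂ : e j < e' (k + 1))
  (h₃ : e' (k + 1) < e (j + 1))
include he he' h₁ h₂ h₃

lemma bounceHeight_sub_bounceHeight (ht : t ∈ Icc (e j) (e' (k + 1))) :
    bounceHeight g H e t - bounceHeight g H e' t =
      g / 2 * (e j + e (j + 1) - e' k - e' (k + 1)) *
        (t - crossTime (e j) (e (j + 1)) (e' k) (e' (k + 1))) := by
  rw [bounceHeight_eq he ⟨ht.1, ht.2.trans h₃.le⟩, bounceHeight_eq he' ⟨h₁.le.trans ht.1, ht.2⟩,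
    mul_assoc, ← arc_sub_arc_eq_mul_sub_crossTime h₁ h₂ h₃]
  ring

lemma bounceHeight_crossTime :
    bounceHeight g H e (crossTime (e j) (e (j + 1)) (e' k) (e' (k + 1))) =
      bounceHeight g H e' (crossTime (e j) (e (j + 1)) (e' k) (e' (k + 1))) := by
  have hc := crossTime_mem_Ioo h₁ h₂ h₃
  have := bounceHeight_sub_bounceHeight (g := g) (H := H) he he' h₁ h₂ h₃ (Ioo_subset_Icc_self hc)
  rwa [sub_self, mul_zero, sub_eq_zero] at this

variable (hg : 0 < g)
include hg

lemma eq_crossTime_of_bounceHeight_eq (ht : t ∈ Icc (e j) (e' (k + 1)))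
    (heq : bounceHeight g H e t = bounceHeight g H e' t) :
    t = crossTime (e j) (e (j + 1)) (e' k) (e' (k + 1)) := by
  have h := bounceHeight_sub_bounceHeight (g := g) (H := H) he he' h₁ h₂ h₃ ht
  have hs := slope_pos_of_staggered h₁ h₂ h₃
  rw [heq, sub_self, eq_comm] at h
  simpa [hg.ne', hs.ne', sub_eq_zero] using h

lemma eventually_lt_nhdsLT_crossTime :
    ∀ᶠ s in 𝓝[<] (crossTime (e j) (e (j + 1)) (e' k) (e' (k + 1))),
      bounceHeight g H e s < bounceHeight g H e' s := by
  have hc := crossTime_mem_Ioo h₁ h₂ h₃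
  filter_upwards [Ioo_mem_nhdsLT_of_mem ⟨hc.1, le_rfl⟩] with s hs
  have h := bounceHeight_sub_bounceHeight (g := g) (H := H) he he' h₁ h₂ h₃
    ⟨hs.1.le, hs.2.le.trans hc.2.le⟩
  nlinarith [mul_pos (half_pos hg) (slope_pos_of_staggered h₁ h₂ h₃), sub_neg.2 hs.2]

lemma eventually_gt_nhdsGT_crossTime :
    ∀ᶠ s in 𝓝[>] (crossTime (e j) (e (j + 1)) (e' k) (e' (k + 1))),
      bounceHeight g H e' s < bounceHeight g H e s := by
  have hc := crossTime_mem_Ioo h₁ h₂ h₃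
  filter_upwards [Ioo_mem_nhdsGT_of_mem ⟨le_rfl, hc.2⟩] with s hs
  have h := bounceHeight_sub_bounceHeight (g := g) (H := H) he he' h₁ h₂ h₃
    ⟨hc.1.le.trans hs.1.le, hs.2.le⟩
  nlinarith [mul_pos (half_pos hg) (slope_pos_of_staggered h₁ h₂ h₃), sub_pos.2 hs.1]

end Staggered

/-- Bounce times `A j`, `B j` of two balls, all congruent to `a` modulo `T`, with flight times
`(n + 2 K j) T` and `(n + K + 2 K j) T`. -/
structure Schedule where
  a : ℝ
  T : ℝ
  K : ℕ
  n : ℕ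
  T_pos : 0 < T
  a_pos : 0 < a
  a_lt : a < 2 * T
  K_pos : 0 < K
  two_le_n : 2 ≤ n

namespace Schedule

variable (s : Schedule)

def A (j : ℕ) : ℝ := s.a + ((j : ℝ) - 1) * (s.n + s.K * j) * s.T

def B (j : ℕ) : ℝ := s.a + (((j : ℝ) - 1) * (s.n + s.K + s.K * j) + 1) * s.T

/-- The `i`-th time the ball bouncing at `A` overtakes the one bouncing at `B`. -/
noncomputable def crossAB (i : ℕ) : ℝ := crossTime (s.A (i + 1)) (s.A (i + 2)) (s.B i) (s.B (i + 1))

noncomputable def crossBA (i : ℕ) : ℝ :=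
  crossTime (s.B (i + 1)) (s.B (i + 2)) (s.A (i + 1)) (s.A (i + 2))

lemma exists_A_eq (j : ℕ) : ∃ z : ℤ, s.A j = s.a + z * s.T :=
  ⟨((j : ℤ) - 1) * (s.n + s.K * j), by simp [A]⟩

lemma exists_B_eq (j : ℕ) : ∃ z : ℤ, s.B j = s.a + z * s.T :=
  ⟨((j : ℤ) - 1) * (s.n + s.K + s.K * j) + 1, by simp [B]⟩

lemma apply_A {φ : ℝ → ℝ} (hφ : Periodic φ s.T) (j : ℕ) : φ (s.A j) = φ s.a := by
  obtain ⟨z, hz⟩ := s.exists_A_eq j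
  rw [hz, hφ.int_mul z s.a]

lemma apply_B {φ : ℝ → ℝ} (hφ : Periodic φ s.T) (j : ℕ) : φ (s.B j) = φ s.a := by
  obtain ⟨z, hz⟩ := s.exists_B_eq j
  rw [hz, hφ.int_mul z s.a]

lemma A_succ_sub (j : ℕ) : s.A (j + 1) - s.A j = (s.n + 2 * s.K * j) * s.T := by
  simp only [A]; push_cast; ring

lemma B_succ_sub (j : ℕ) : s.B (j + 1) - s.B j = (s.n + s.K + 2 * s.K * j) * s.T := by
  simp only [B]; push_cast; ring

lemma one_le_K : (1 : ℝ) ≤ s.K := by exact_mod_cast s.K_pos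

lemma two_le_n' : (2 : ℝ) ≤ s.n := by exact_mod_cast s.two_le_n

lemma n_mul_T_le_A_succ_sub (j : ℕ) : s.n * s.T ≤ s.A (j + 1) - s.A j := by
  have := s.T_pos
  rw [A_succ_sub, add_mul]
  exact le_add_of_nonneg_right (by positivity)

lemma n_mul_T_le_B_succ_sub (j : ℕ) : s.n * s.T ≤ s.B (j + 1) - s.B j := by
  have := s.T_pos
  rw [B_succ_sub, add_assoc, add_mul]
  exact le_add_of_nonneg_right (by positivity)

lemma n_mul_T_pos : 0 < s.n * s.T := mul_pos (by linarith [s.two_le_n']) s.T_pos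

lemma A_strictMono : StrictMono s.A :=
  (strictMono_and_tendsto_of_le_succ_sub s.n_mul_T_pos s.n_mul_T_le_A_succ_sub).1

lemma B_strictMono : StrictMono s.B :=
  (strictMono_and_tendsto_of_le_succ_sub s.n_mul_T_pos s.n_mul_T_le_B_succ_sub).1

lemma tendsto_A : Tendsto s.A atTop atTop :=
  (strictMono_and_tendsto_of_le_succ_sub s.n_mul_T_pos s.n_mul_T_le_A_succ_sub).2

lemma tendsto_B : Tendsto s.B atTop atTop :=
  (strictMono_and_tendsto_of_le_succ_sub s.n_mul_T_pos s.n_mul_T_le_B_succ_sub).2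

lemma A_one : s.A 1 = s.a := by simp [A]

lemma A_zero_neg : s.A 0 < 0 := by
  simp only [A]; push_cast; nlinarith [s.a_lt, s.two_le_n', s.T_pos]

lemma B_zero_neg : s.B 0 < 0 := by
  simp only [B]; push_cast; nlinarith [s.a_lt, s.two_le_n', s.one_le_K, s.T_pos]

lemma B_zero_le_A_zero : s.B 0 ≤ s.A 0 := by
  simp only [A, B]; push_cast; nlinarith [s.one_le_K, s.T_pos]

lemma A_one_lt_B_one : s.A 1 < s.B 1 := by simp [A, B, s.T_pos]

lemma B_lt_A_succ (j : ℕ) : s.B j < s.A (j + 1) := by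
  have h : s.A (j + 1) - s.B j = (s.K * j + s.n + s.K - 1) * s.T := by
    simp only [A, B]; push_cast; ring
  have hKj : (0 : ℝ) ≤ s.K * j := by positivity
  rw [← sub_pos, h]
  exact mul_pos (by linarith [s.two_le_n', s.one_le_K]) s.T_pos

lemma A_lt_B (j : ℕ) : s.A (j + 1) < s.B (j + 1) := by
  have h : s.B (j + 1) - s.A (j + 1) = (s.K * j + 1) * s.T := by simp only [A, B]; push_cast; ring
  have := s.T_pos
  rw [← sub_pos, h]
  positivity

lemma A_succ_pos (i : ℕ) : 0 < s.A (i + 1) :=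
  s.A_one ▸ s.a_pos |>.trans_le (s.A_strictMono.monotone (by omega))

lemma crossAB_mem_Ioo (i : ℕ) : s.crossAB i ∈ Ioo (s.A (i + 1)) (s.B (i + 1)) :=
  crossTime_mem_Ioo (s.B_lt_A_succ i) (s.A_lt_B i) (s.B_lt_A_succ (i + 1))

lemma crossBA_mem_Ioo (i : ℕ) : s.crossBA i ∈ Ioo (s.B (i + 1)) (s.A (i + 2)) :=
  crossTime_mem_Ioo (s.A_lt_B i) (s.B_lt_A_succ (i + 1)) (s.A_lt_B (i + 1))

lemma T_sq_mul_le_sq_crossAB (i : ℕ) :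
    s.T ^ 2 * i ≤ (s.A (i + 1) + s.A (i + 2) - 2 * s.crossAB i) ^ 2 := by
  refine le_trans ?_
    (sq_sub_sq_le_sq_crossTime (s.B_lt_A_succ i) (s.A_lt_B i) (s.B_lt_A_succ (i + 1)))
  have h : (s.A (i + 2) - s.A (i + 1)) ^ 2 - (s.B (i + 1) - s.B i) ^ 2 =
      s.K * (2 * s.n + 3 * s.K + 4 * s.K * i) * s.T ^ 2 := by
    simp only [A, B]; push_cast; ring
  rw [h, mul_comm (s.T ^ 2)]
  refine mul_le_mul_of_nonneg_right ?_ (sq_nonneg s.T)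
  have hi : (0 : ℝ) ≤ i := Nat.cast_nonneg i
  nlinarith [s.one_le_K, s.two_le_n', mul_nonneg (sub_nonneg.2 s.one_le_K)
    (show (0 : ℝ) ≤ 2 * s.n + 3 * s.K + 4 * s.K * i by positivity)]

lemma T_sq_mul_le_sq_crossBA (i : ℕ) :
    s.T ^ 2 * i ≤ (s.B (i + 1) + s.B (i + 2) - 2 * s.crossBA i) ^ 2 := by
  refine le_trans ?_
    (sq_sub_sq_le_sq_crossTime (s.A_lt_B i) (s.B_lt_A_succ (i + 1)) (s.A_lt_B (i + 1)))
  have h : (s.B (i + 2) - s.B (i + 1)) ^ 2 - (s.A (i + 2) - s.A (i + 1)) ^ 2 =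
      s.K * (2 * s.n + 5 * s.K + 4 * s.K * i) * s.T ^ 2 := by
    simp only [A, B]; push_cast; ring
  rw [h, mul_comm (s.T ^ 2)]
  refine mul_le_mul_of_nonneg_right ?_ (sq_nonneg s.T)
  have hi : (0 : ℝ) ≤ i := Nat.cast_nonneg i
  nlinarith [s.one_le_K, s.two_le_n', mul_nonneg (sub_nonneg.2 s.one_le_K)
    (show (0 : ℝ) ≤ 2 * s.n + 5 * s.K + 4 * s.K * i by positivity)]

lemma T_sq_mul_le_sq_A_sub (i : ℕ) : s.T ^ 2 * i ≤ (s.A (i + 2) - s.A (i + 1)) ^ 2 := by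
  have h : s.A (i + 2) - s.A (i + 1) = (s.n + 2 * s.K * (i + 1)) * s.T := by
    simpa using s.A_succ_sub (i + 1)
  have hi : (0 : ℝ) ≤ i := Nat.cast_nonneg i
  rw [h, mul_pow, mul_comm (s.T ^ 2)]
  refine mul_le_mul_of_nonneg_right ?_ (sq_nonneg s.T)
  have hX : (i : ℝ) + 1 ≤ s.n + 2 * s.K * (i + 1) := by
    nlinarith [s.one_le_K, s.two_le_n']
  nlinarith [mul_le_mul hX hX (by positivity) (by positivity)]

lemma T_sq_mul_le_sq_B_sub (i : ℕ) : s.T ^ 2 * i ≤ (s.B (i + 2) - s.B (i + 1)) ^ 2 := by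
  have h : s.B (i + 2) - s.B (i + 1) = (s.n + s.K + 2 * s.K * (i + 1)) * s.T := by
    simpa using s.B_succ_sub (i + 1)
  have hi : (0 : ℝ) ≤ i := Nat.cast_nonneg i
  rw [h, mul_pow, mul_comm (s.T ^ 2)]
  refine mul_le_mul_of_nonneg_right ?_ (sq_nonneg s.T)
  have hX : (i : ℝ) + 1 ≤ s.n + s.K + 2 * s.K * (i + 1) := by
    nlinarith [s.one_le_K, s.two_le_n']
  nlinarith [mul_le_mul hX hX (by positivity) (by positivity)]

lemma A_add_two_sub (j : ℕ) : s.A (j + 2) - s.A (j + 1) = s.A (j + 1) - s.A j + 2 * s.K * s.T := by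
  simp only [A]; push_cast; ring

lemma B_add_two_sub (j : ℕ) : s.B (j + 2) - s.B (j + 1) = s.B (j + 1) - s.B j + 2 * s.K * s.T := by
  simp only [B]; push_cast; ring

section Meetings

def bounceTime : ℕ → ℝ := interleave (fun i => s.A (i + 1)) (fun i => s.B (i + 1))

noncomputable def meetTime : ℕ → ℝ := interleave s.crossAB s.crossBA

/-- Velocity of the lower ball just after the `k`-th bounce. -/
noncomputable def bounceVel (g : ℝ) : ℕ → ℝ :=
  interleave (fun i => g / 2 * (s.A (i + 2) - s.A (i + 1)))
    (fun i => g / 2 * (s.B (i + 2) - s.B (i + 1)))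

/-- Velocity of the upper ball just after the `k`-th meeting. -/
noncomputable def meetVel (g : ℝ) : ℕ → ℝ :=
  interleave (fun i => bounceVelocity g s.A (s.crossAB i))
    (fun i => bounceVelocity g s.B (s.crossBA i))

lemma bounceTime_strictMono : StrictMono s.bounceTime :=
  interleave_strictMono s.A_lt_B fun i => s.B_lt_A_succ (i + 1)

lemma meetTime_strictMono : StrictMono s.meetTime :=
  interleave_strictMono (fun i => (s.crossAB_mem_Ioo i).2.trans (s.crossBA_mem_Ioo i).1)
    (fun i => (s.crossBA_mem_Ioo i).2.trans (s.crossAB_mem_Ioo (i + 1)).1)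

lemma tendsto_bounceTime : Tendsto s.bounceTime atTop atTop :=
  tendsto_interleave (s.tendsto_A.comp (tendsto_add_atTop_nat 1))
    (s.tendsto_B.comp (tendsto_add_atTop_nat 1))

lemma tendsto_meetTime : Tendsto s.meetTime atTop atTop :=
  tendsto_interleave
    (tendsto_atTop_mono (fun i => (s.crossAB_mem_Ioo i).1.le)
      (s.tendsto_A.comp (tendsto_add_atTop_nat 1)))
    (tendsto_atTop_mono (fun i => (s.crossBA_mem_Ioo i).1.le)
      (s.tendsto_B.comp (tendsto_add_atTop_nat 1)))

lemma bounceTime_pos (k : ℕ) : 0 < s.bounceTime k := by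
  obtain ⟨i, rfl | rfl⟩ := Nat.even_or_odd' k
  · simpa [bounceTime] using s.A_succ_pos i
  · simpa [bounceTime] using (s.A_succ_pos i).trans (s.A_lt_B i)

lemma meetTime_pos (k : ℕ) : 0 < s.meetTime k := by
  obtain ⟨i, rfl | rfl⟩ := Nat.even_or_odd' k
  · simpa [meetTime] using (s.A_succ_pos i).trans (s.crossAB_mem_Ioo i).1
  · simpa [meetTime] using ((s.A_succ_pos i).trans (s.A_lt_B i)).trans (s.crossBA_mem_Ioo i).1

variable (g H : ℝ)

noncomputable def x₁ (t : ℝ) : ℝ := max (bounceHeight g H s.A t) (bounceHeight g H s.B t)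

noncomputable def x₂ (t : ℝ) : ℝ := min (bounceHeight g H s.A t) (bounceHeight g H s.B t)

noncomputable def v₁ : ℝ → ℝ :=
  upperVel (bounceHeight g H s.A) (bounceHeight g H s.B)
    (bounceVelocity g s.A) (bounceVelocity g s.B)

noncomputable def v₂ : ℝ → ℝ :=
  lowerVel (bounceHeight g H s.A) (bounceHeight g H s.B)
    (bounceVelocity g s.A) (bounceVelocity g s.B)

variable {g H} {t : ℝ}

lemma continuousAt_bounceHeight_A (h0 : 0 ≤ t) : ContinuousAt (bounceHeight g H s.A) t :=
  continuousAt_bounceHeight s.A_strictMono s.tendsto_A (s.A_zero_neg.trans_le h0)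

lemma continuousAt_bounceHeight_B (h0 : 0 ≤ t) : ContinuousAt (bounceHeight g H s.B) t :=
  continuousAt_bounceHeight s.B_strictMono s.tendsto_B (s.B_zero_neg.trans_le h0)

lemma continuousOn_x₁ : ContinuousOn (s.x₁ g H) (Ici 0) := fun _ h0 =>
  ContinuousAt.continuousWithinAt
    ((s.continuousAt_bounceHeight_A h0).max (s.continuousAt_bounceHeight_B h0))

lemma continuousOn_x₂ : ContinuousOn (s.x₂ g H) (Ici 0) := fun _ h0 =>
  ContinuousAt.continuousWithinAt
    ((s.continuousAt_bounceHeight_A h0).min (s.continuousAt_bounceHeight_B h0))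

variable (hg : 0 < g)
include hg

lemma tendsto_crossAB (i : ℕ) :
    Tendsto (s.v₁ g H) (𝓝[<] (s.crossAB i)) (𝓝 (bounceVelocity g s.B (s.crossAB i))) ∧
      Tendsto (s.v₂ g H) (𝓝[<] (s.crossAB i)) (𝓝 (bounceVelocity g s.A (s.crossAB i))) ∧
      Tendsto (s.v₁ g H) (𝓝[>] (s.crossAB i)) (𝓝 (bounceVelocity g s.A (s.crossAB i))) ∧
      Tendsto (s.v₂ g H) (𝓝[>] (s.crossAB i)) (𝓝 (bounceVelocity g s.B (s.crossAB i))) := by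
  have h₁ := s.B_lt_A_succ i
  have h₂ := s.A_lt_B i
  have h₃ := s.B_lt_A_succ (i + 1)
  have hc := s.crossAB_mem_Ioo i
  exact tendsto_sorted_of_lt_of_gt
    (eventually_lt_nhdsLT_crossTime s.A_strictMono s.B_strictMono h₁ h₂ h₃ hg)
    (eventually_gt_nhdsGT_crossTime s.A_strictMono s.B_strictMono h₁ h₂ h₃ hg)
    (continuousAt_bounceVelocity s.A_strictMono ⟨hc.1, hc.2.trans h₃⟩)
    (continuousAt_bounceVelocity s.B_strictMono ⟨h₁.trans hc.1, hc.2⟩)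

lemma tendsto_crossBA (i : ℕ) :
    Tendsto (s.v₁ g H) (𝓝[<] (s.crossBA i)) (𝓝 (bounceVelocity g s.A (s.crossBA i))) ∧
      Tendsto (s.v₂ g H) (𝓝[<] (s.crossBA i)) (𝓝 (bounceVelocity g s.B (s.crossBA i))) ∧
      Tendsto (s.v₁ g H) (𝓝[>] (s.crossBA i)) (𝓝 (bounceVelocity g s.B (s.crossBA i))) ∧
      Tendsto (s.v₂ g H) (𝓝[>] (s.crossBA i)) (𝓝 (bounceVelocity g s.A (s.crossBA i))) := by
  have h₁ := s.A_lt_B i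
  have h₂ := s.B_lt_A_succ (i + 1)
  have h₃ := s.A_lt_B (i + 1)
  have hc := s.crossBA_mem_Ioo i
  exact tendsto_sorted_of_gt_of_lt
    (eventually_lt_nhdsLT_crossTime s.B_strictMono s.A_strictMono h₁ h₂ h₃ hg)
    (eventually_gt_nhdsGT_crossTime s.B_strictMono s.A_strictMono h₁ h₂ h₃ hg)
    (continuousAt_bounceVelocity s.A_strictMono ⟨h₁.trans hc.1, hc.2⟩)
    (continuousAt_bounceVelocity s.B_strictMono ⟨hc.1, hc.2.trans h₃⟩)

lemma ball_law (m : ℝ) (ht : t ∈ range s.meetTime) :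
    ∃ a₁ a₂ b₁ b₂ : ℝ,
      Tendsto (s.v₁ g H) (𝓝[<] t) (𝓝 a₁) ∧ Tendsto (s.v₂ g H) (𝓝[<] t) (𝓝 a₂) ∧
      Tendsto (s.v₁ g H) (𝓝[>] t) (𝓝 b₁) ∧ Tendsto (s.v₂ g H) (𝓝[>] t) (𝓝 b₂) ∧
      b₁ = (m - m) / (m + m) * a₁ + (1 - (m - m) / (m + m)) * a₂ ∧
      b₂ = (1 + (m - m) / (m + m)) * a₁ - (m - m) / (m + m) * a₂ := by
  rw [meetTime, range_interleave] at ht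
  rcases ht with ⟨i, rfl⟩ | ⟨i, rfl⟩
  · obtain ⟨h₁, h₂, h₃, h₄⟩ := s.tendsto_crossAB (H := H) hg i
    exact ball_law_of_exchange m h₁ h₂ h₃ h₄
  · obtain ⟨h₁, h₂, h₃, h₄⟩ := s.tendsto_crossBA (H := H) hg i
    exact ball_law_of_exchange m h₁ h₂ h₃ h₄

lemma tendsto_v₁_meetTime (k : ℕ) :
    Tendsto (s.v₁ g H) (𝓝[>] (s.meetTime k)) (𝓝 (s.meetVel g k)) := by
  obtain ⟨i, rfl | rfl⟩ := Nat.even_or_odd' k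
  · simpa [meetTime, meetVel] using (s.tendsto_crossAB (H := H) hg i).2.2.1
  · simpa [meetTime, meetVel] using (s.tendsto_crossBA (H := H) hg i).2.2.1

lemma tendsto_abs_half_mul {x : ℕ → ℝ} (hx : ∀ i, s.T ^ 2 * i ≤ x i ^ 2) :
    Tendsto (fun i => |g / 2 * x i|) atTop atTop :=
  tendsto_abs_of_mul_le_sq (by have := s.T_pos; positivity : 0 < (g / 2 * s.T) ^ 2) fun i => by
    rw [mul_pow, mul_pow, mul_assoc]
    exact mul_le_mul_of_nonneg_left (hx i) (by positivity)

lemma tendsto_abs_meetVel : Tendsto (fun k => |s.meetVel g k|) atTop atTop := by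
  have hA : ∀ i, bounceVelocity g s.A (s.crossAB i) =
      g / 2 * (s.A (i + 1) + s.A (i + 2) - 2 * s.crossAB i) := fun i =>
    bounceVelocity_eq s.A_strictMono
      ⟨(s.crossAB_mem_Ioo i).1, ((s.crossAB_mem_Ioo i).2.trans (s.B_lt_A_succ (i + 1))).le⟩
  have hB : ∀ i, bounceVelocity g s.B (s.crossBA i) =
      g / 2 * (s.B (i + 1) + s.B (i + 2) - 2 * s.crossBA i) := fun i =>
    bounceVelocity_eq s.B_strictMono
      ⟨(s.crossBA_mem_Ioo i).1, ((s.crossBA_mem_Ioo i).2.trans (s.A_lt_B (i + 1))).le⟩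
  change Tendsto (abs ∘ s.meetVel g) atTop atTop
  rw [meetVel, comp_interleave]
  exact tendsto_interleave
    (by simpa only [comp_def, hA] using s.tendsto_abs_half_mul hg s.T_sq_mul_le_sq_crossAB)
    (by simpa only [comp_def, hB] using s.tendsto_abs_half_mul hg s.T_sq_mul_le_sq_crossBA)

lemma tendsto_abs_bounceVel : Tendsto (fun k => |s.bounceVel g k|) atTop atTop := by
  change Tendsto (abs ∘ s.bounceVel g) atTop atTop
  rw [bounceVel, comp_interleave]
  exact tendsto_interleave (s.tendsto_abs_half_mul hg s.T_sq_mul_le_sq_A_sub)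
    (s.tendsto_abs_half_mul hg s.T_sq_mul_le_sq_B_sub)

lemma bounceHeight_A_eq_B_iff (h0 : 0 ≤ t) :
    bounceHeight g H s.A t = bounceHeight g H s.B t ↔ t ∈ range s.meetTime := by
  rw [meetTime, range_interleave]
  constructor
  · intro heq
    rcases le_or_gt t (s.A 1) with ht | ht
    · have hA0 := s.A_zero_neg.trans_le h0
      have hB1 := ht.trans_lt s.A_one_lt_B_one
      rw [bounceHeight_eq s.A_strictMono ⟨hA0.le, ht⟩,
        bounceHeight_eq s.B_strictMono ⟨(s.B_zero_le_A_zero.trans hA0.le), hB1.le⟩, zero_add] at heq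
      have := arc_lt_arc_of_nested s.B_zero_le_A_zero s.A_one_lt_B_one hA0 ht
      nlinarith
    obtain ⟨j, hj, hj'⟩ := s.A_strictMono.exists_between_of_tendsto_atTop s.tendsto_A
      (s.A_zero_neg.trans_le h0)
    obtain ⟨i, rfl⟩ : ∃ i, j = i + 1 :=
      Nat.exists_eq_succ_of_ne_zero fun hj0 => by subst hj0; exact hj'.not_gt ht
    rcases le_or_gt t (s.B (i + 1)) with htB | htB
    · exact Or.inl ⟨i, (eq_crossTime_of_bounceHeight_eq s.A_strictMono s.B_strictMono
        (s.B_lt_A_succ i) (s.A_lt_B i) (s.B_lt_A_succ (i + 1)) hg ⟨hj.le, htB⟩ heq).symm⟩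
    · exact Or.inr ⟨i, (eq_crossTime_of_bounceHeight_eq s.B_strictMono s.A_strictMono
        (s.A_lt_B i) (s.B_lt_A_succ (i + 1)) (s.A_lt_B (i + 1)) hg ⟨htB.le, hj'⟩ heq.symm).symm⟩
  · rintro (⟨i, rfl⟩ | ⟨i, rfl⟩)
    · exact bounceHeight_crossTime s.A_strictMono s.B_strictMono
        (s.B_lt_A_succ i) (s.A_lt_B i) (s.B_lt_A_succ (i + 1))
    · exact (bounceHeight_crossTime s.B_strictMono s.A_strictMono
        (s.A_lt_B i) (s.B_lt_A_succ (i + 1)) (s.A_lt_B (i + 1))).symm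

end Meetings

section Plate

def coll (g : ℝ) (f : ℝ → ℝ) : Set ℝ :=
  {t | 0 ≤ t ∧ (s.x₂ g (f s.a) t = f t ∨ s.x₁ g (f s.a) t = s.x₂ g (f s.a) t)}

variable {g : ℝ} {f : ℝ → ℝ} {L : NNReal} {t : ℝ}
variable (hg : 0 < g) (hf : LipschitzWith L f) (hper : Periodic f s.T)
  (hgap : 4 * L < g * (s.n * s.T))

include hg hgap in
lemma four_mul_lt_A_sub (j : ℕ) : 4 * L < g * (s.A (j + 1) - s.A j) :=
  hgap.trans_le (mul_le_mul_of_nonneg_left (s.n_mul_T_le_A_succ_sub j) hg.le)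

include hg hgap in
lemma four_mul_lt_B_sub (j : ℕ) : 4 * L < g * (s.B (j + 1) - s.B j) :=
  hgap.trans_le (mul_le_mul_of_nonneg_left (s.n_mul_T_le_B_succ_sub j) hg.le)

include hg hf hper hgap

lemma lt_bounceHeight_A (h0 : 0 ≤ t) (ht : t ∉ range s.A) : f t < bounceHeight g (f s.a) s.A t :=
  lt_bounceHeight hg s.A_strictMono hf (s.apply_A hper) (s.four_mul_lt_A_sub hg hgap) s.tendsto_A
    (s.A_zero_neg.trans_le h0) ht

lemma lt_bounceHeight_B (h0 : 0 ≤ t) (ht : t ∉ range s.B) : f t < bounceHeight g (f s.a) s.B t :=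
  lt_bounceHeight hg s.B_strictMono hf (s.apply_B hper) (s.four_mul_lt_B_sub hg hgap) s.tendsto_B
    (s.B_zero_neg.trans_le h0) ht

lemma f_le_x₂ (h0 : 0 ≤ t) : f t ≤ s.x₂ g (f s.a) t :=
  le_min
    (le_bounceHeight hg s.A_strictMono hf (s.apply_A hper) (s.four_mul_lt_A_sub hg hgap) s.tendsto_A
      (s.A_zero_neg.trans_le h0))
    (le_bounceHeight hg s.B_strictMono hf (s.apply_B hper) (s.four_mul_lt_B_sub hg hgap) s.tendsto_B
      (s.B_zero_neg.trans_le h0))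

lemma x₂_eq_iff (h0 : 0 ≤ t) : s.x₂ g (f s.a) t = f t ↔ t ∈ range s.bounceTime := by
  rw [bounceTime, range_interleave]
  constructor
  · intro h
    by_contra hne
    have hA : t ∉ range s.A := by
      rintro ⟨_ | i, rfl⟩
      exacts [s.A_zero_neg.not_ge h0, hne (Or.inl ⟨i, rfl⟩)]
    have hB : t ∉ range s.B := by
      rintro ⟨_ | i, rfl⟩
      exacts [s.B_zero_neg.not_ge h0, hne (Or.inr ⟨i, rfl⟩)]
    exact (lt_min (s.lt_bounceHeight_A hg hf hper hgap h0 hA)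
      (s.lt_bounceHeight_B hg hf hper hgap h0 hB)).ne' h
  · refine fun ht => le_antisymm ?_ (s.f_le_x₂ hg hf hper hgap h0)
    rcases ht with ⟨i, rfl⟩ | ⟨i, rfl⟩
    · exact (min_le_left _ _).trans_eq
        (by rw [bounceHeight_apply s.A_strictMono, s.apply_A hper])
    · exact (min_le_right _ _).trans_eq
        (by rw [bounceHeight_apply s.B_strictMono, s.apply_B hper])

lemma eventually_lt_nhds_A (i : ℕ) :
    ∀ᶠ t in 𝓝 (s.A (i + 1)), bounceHeight g (f s.a) s.A t < bounceHeight g (f s.a) s.B t := by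
  have h0 := (s.A_succ_pos i).le
  refine (s.continuousAt_bounceHeight_A h0).eventually_lt (s.continuousAt_bounceHeight_B h0) ?_
  have h := lt_bounceHeight_of_mem_Ioo hg s.B_strictMono hf (s.apply_B hper)
    (s.four_mul_lt_B_sub hg hgap) ⟨s.B_lt_A_succ i, s.A_lt_B i⟩
  rw [bounceHeight_apply s.A_strictMono]
  rwa [s.apply_A hper] at h

lemma eventually_lt_nhds_B (i : ℕ) :
    ∀ᶠ t in 𝓝 (s.B (i + 1)), bounceHeight g (f s.a) s.B t < bounceHeight g (f s.a) s.A t := by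
  have h0 := ((s.A_succ_pos i).trans (s.A_lt_B i)).le
  refine (s.continuousAt_bounceHeight_B h0).eventually_lt (s.continuousAt_bounceHeight_A h0) ?_
  have h := lt_bounceHeight_of_mem_Ioo hg s.A_strictMono hf (s.apply_A hper)
    (s.four_mul_lt_A_sub hg hgap) ⟨s.A_lt_B i, s.B_lt_A_succ (i + 1)⟩
  rw [bounceHeight_apply s.B_strictMono]
  rwa [s.apply_B hper] at h

lemma x₁_ne_x₂_of_mem_range_bounceTime (ht : t ∈ range s.bounceTime) :
    s.x₁ g (f s.a) t ≠ s.x₂ g (f s.a) t := by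
  rw [bounceTime, range_interleave] at ht
  rcases ht with ⟨i, rfl⟩ | ⟨i, rfl⟩
  · exact fun h => (s.eventually_lt_nhds_A hg hf hper hgap i).self_of_nhds.ne (sup_eq_inf.1 h)
  · exact fun h => (s.eventually_lt_nhds_B hg hf hper hgap i).self_of_nhds.ne (sup_eq_inf.1 h).symm

lemma plate_law (hder : deriv f s.a = s.K * s.T * g / 2) (ht : t ∈ range s.bounceTime) :
    (∃ a b : ℝ, Tendsto (s.v₂ g (f s.a)) (𝓝[<] t) (𝓝 a) ∧
      Tendsto (s.v₂ g (f s.a)) (𝓝[>] t) (𝓝 b) ∧ b = -a + 2 * deriv f t) ∧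
    (∃ a : ℝ, Tendsto (s.v₁ g (f s.a)) (𝓝[<] t) (𝓝 a) ∧
      Tendsto (s.v₁ g (f s.a)) (𝓝[>] t) (𝓝 a)) := by
  rw [bounceTime, range_interleave] at ht
  rcases ht with ⟨i, rfl⟩ | ⟨i, rfl⟩
  · have hev := s.eventually_lt_nhds_A hg hf hper hgap i
    refine plate_law_of_eventuallyEq s.A_strictMono (lowerVel_eventuallyEq_of_lt hev)
      ((continuousAt_bounceVelocity s.B_strictMono ⟨s.B_lt_A_succ i, s.A_lt_B i⟩).congr
        (upperVel_eventuallyEq_of_lt hev).symm) ?_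
    rw [s.A_add_two_sub, s.apply_A hper.deriv, hder]
    ring
  · have hev := s.eventually_lt_nhds_B hg hf hper hgap i
    refine plate_law_of_eventuallyEq s.B_strictMono (lowerVel_eventuallyEq_of_gt hev)
      ((continuousAt_bounceVelocity s.A_strictMono ⟨s.A_lt_B i, s.B_lt_A_succ (i + 1)⟩).congr
        (upperVel_eventuallyEq_of_gt hev).symm) ?_
    rw [s.B_add_two_sub, s.apply_B hper.deriv, hder]
    ring

lemma tendsto_v₂_bounceTime (k : ℕ) :
    Tendsto (s.v₂ g (f s.a)) (𝓝[>] (s.bounceTime k)) (𝓝 (s.bounceVel g k)) := by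
  obtain ⟨i, rfl | rfl⟩ := Nat.even_or_odd' k
  · simp only [bounceTime, bounceVel, interleave_two_mul]
    exact (tendsto_bounceVelocity_nhdsGT s.A_strictMono (i + 1)).congr'
      ((lowerVel_eventuallyEq_of_lt (s.eventually_lt_nhds_A hg hf hper hgap i)).filter_mono
        nhdsWithin_le_nhds).symm
  · simp only [bounceTime, bounceVel, interleave_two_mul_add_one]
    exact (tendsto_bounceVelocity_nhdsGT s.B_strictMono (i + 1)).congr'
      ((lowerVel_eventuallyEq_of_gt (s.eventually_lt_nhds_B hg hf hper hgap i)).filter_mono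
        nhdsWithin_le_nhds).symm

lemma hasDerivAt_of_notMem_coll (h0 : 0 ≤ t) (ht : t ∉ s.coll g f) :
    (HasDerivAt (s.x₁ g (f s.a)) (s.v₁ g (f s.a) t) t ∧ HasDerivAt (s.v₁ g (f s.a)) (-g) t) ∧
    (HasDerivAt (s.x₂ g (f s.a)) (s.v₂ g (f s.a) t) t ∧ HasDerivAt (s.v₂ g (f s.a)) (-g) t) := by
  have hbounce : t ∉ range s.bounceTime := fun hb =>
    ht ⟨h0, Or.inl ((s.x₂_eq_iff hg hf hper hgap h0).2 hb)⟩
  have hA : t ∉ range s.A := by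
    rintro ⟨_ | i, rfl⟩
    exacts [s.A_zero_neg.not_ge h0, hbounce ⟨2 * i, by simp [bounceTime]⟩]
  have hB : t ∉ range s.B := by
    rintro ⟨_ | i, rfl⟩
    exacts [s.B_zero_neg.not_ge h0, hbounce ⟨2 * i + 1, by simp [bounceTime]⟩]
  obtain ⟨j, hj⟩ := exists_mem_Ioo_of_notMem_range s.A_strictMono s.tendsto_A
    (s.A_zero_neg.trans_le h0) hA
  obtain ⟨k, hk⟩ := exists_mem_Ioo_of_notMem_range s.B_strictMono s.tendsto_B
    (s.B_zero_neg.trans_le h0) hB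
  exact hasDerivAt_sorted (fun h => ht ⟨h0, Or.inr (sup_eq_inf.2 h)⟩)
    (hasDerivAt_bounceHeight s.A_strictMono hj) (hasDerivAt_bounceHeight s.B_strictMono hk)
    (hasDerivAt_bounceVelocity s.A_strictMono hj) (hasDerivAt_bounceVelocity s.B_strictMono hk)

lemma coll_subset : s.coll g f ⊆ range (interleave s.bounceTime s.meetTime) := by
  rintro t ⟨h0, h | h⟩ <;> rw [range_interleave]
  · exact Or.inl ((s.x₂_eq_iff hg hf hper hgap h0).1 h)
  · exact Or.inr ((s.bounceHeight_A_eq_B_iff hg h0).1 (sup_eq_inf.1 h))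

end Plate

section Construction

variable {g : ℝ} {f : ℝ → ℝ} {L : NNReal}
variable (hg : 0 < g) (hf : LipschitzWith L f) (hper : Periodic f s.T)
  (hgap : 4 * L < g * (s.n * s.T)) (hder : deriv f s.a = s.K * s.T * g / 2)

noncomputable def motion (m : ℝ) : BouncingBallMotion g f m m where
  x₁ := s.x₁ g (f s.a)
  x₂ := s.x₂ g (f s.a)
  v₁ := s.v₁ g (f s.a)
  v₂ := s.v₂ g (f s.a)
  coll := s.coll g f
  cont₁ := s.continuousOn_x₁
  cont₂ := s.continuousOn_x₂
  order _ h0 := ⟨s.f_le_x₂ hg hf hper hgap h0, min_le_max⟩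
  coll_sub _ ht := ht.1
  coll_discrete := exists_pos_forall_eq_of_subset_range
    (tendsto_interleave s.tendsto_bounceTime s.tendsto_meetTime) (s.coll_subset hg hf hper hgap)
  freefall₁ _ ht := (s.hasDerivAt_of_notMem_coll hg hf hper hgap ht.1 ht.2).1
  freefall₂ _ ht := (s.hasDerivAt_of_notMem_coll hg hf hper hgap ht.1 ht.2).2
  contact_mem_coll _ h0 h := ⟨h0, h⟩
  coll_is_contact _ ht := ht.2
  no_triple _ ht h := s.x₁_ne_x₂_of_mem_range_bounceTime hg hf hper hgap
    ((s.x₂_eq_iff hg hf hper hgap ht.1).1 h.1) h.2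
  plate_law _ ht _ h := s.plate_law hg hf hper hgap hder ((s.x₂_eq_iff hg hf hper hgap ht.1).1 h)
  ball_law _ ht _ h := s.ball_law hg m ((s.bounceHeight_A_eq_B_iff hg ht.1).1 (sup_eq_inf.1 h))

end Construction

-- The bounces happen at the times `a + z T` with `a ∈ [T, 2 T)`, so that the first comes after `0`.
lemma exists_of_deriv_eq {g T t₀ : ℝ} {f : ℝ → ℝ} {K : ℕ} (hg : 0 < g) (hT : 0 < T)
    (hper : Periodic f T) (hK : 0 < K) (hder : deriv f t₀ = K * T * g / 2) (L : NNReal) :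
    ∃ s : Schedule, s.T = T ∧ 4 * L < g * (s.n * s.T) ∧ deriv f s.a = s.K * s.T * g / 2 := by
  have ha := toIcoMod_mem_Ico hT T t₀
  let s : Schedule :=
    { a := toIcoMod hT T t₀, T := T, K := K, n := ⌈4 * L / (g * T)⌉₊ + 2, T_pos := hT,
      a_pos := hT.trans_le ha.1, a_lt := by linarith [ha.2], K_pos := hK, two_le_n := by omega }
  refine ⟨s, rfl, ?_, (hper.deriv.sub_zsmul_eq _).trans hder⟩
  have hceil := Nat.le_ceil (4 * L / (g * T))
  rw [div_le_iff₀ (mul_pos hg hT)] at hceil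
  simp only [s, Nat.cast_add, Nat.cast_ofNat]
  nlinarith [mul_pos hg hT]

end Schedule

end BouncingBall

open BouncingBall

theorem equal_masses_both_velocities_tendsto_infinity_general
    (g T m : ℝ) (hg : 0 < g) (hT : 0 < T)
    (f : ℝ → ℝ) (hf : ContDiff ℝ 1 f) (hfper : Function.Periodic f T)
    (hclass : ∃ t₀ : ℝ, ∃ K : ℕ, 0 < K ∧ deriv f t₀ = K * T * g / 2) :
    ∃ M : BouncingBallMotion g f m m, ∃ p q V₁ V₂ : ℕ → ℝ,
      StrictMono p ∧ StrictMono q ∧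
      (∀ i : ℕ, p i ∈ M.coll ∧ M.x₂ (p i) = f (p i)) ∧
      (∀ i : ℕ, q i ∈ M.coll ∧ M.x₁ (q i) = M.x₂ (q i)) ∧
      (∀ t ∈ M.coll, M.x₂ t = f t → ∃ i : ℕ, p i = t) ∧
      (∀ t ∈ M.coll, M.x₁ t = M.x₂ t → ∃ i : ℕ, q i = t) ∧
      (∀ i : ℕ, Tendsto M.v₂ (𝓝[>] (p i)) (𝓝 (V₂ i))) ∧
      (∀ i : ℕ, Tendsto M.v₁ (𝓝[>] (q i)) (𝓝 (V₁ i))) ∧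
      Tendsto (fun i : ℕ => |V₁ i|) atTop atTop ∧
      Tendsto (fun i : ℕ => |V₂ i|) atTop atTop := by
  obtain ⟨t₀, K, hK, hder⟩ := hclass
  obtain ⟨L, hL⟩ := hfper.exists_lipschitzWith hf hT.ne'
  obtain ⟨s, rfl, hgap, hder⟩ := Schedule.exists_of_deriv_eq hg hT hfper hK hder L
  refine ⟨s.motion hg hL hfper hgap hder m, s.bounceTime, s.meetTime, s.meetVel g, s.bounceVel g,
    s.bounceTime_strictMono, s.meetTime_strictMono, fun k => ?_, fun k => ?_,
    fun t ht h => (s.x₂_eq_iff hg hL hfper hgap ht.1).1 h,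
    fun t ht h => (s.bounceHeight_A_eq_B_iff hg ht.1).1 (sup_eq_inf.1 h),
    s.tendsto_v₂_bounceTime hg hL hfper hgap, s.tendsto_v₁_meetTime hg,
    s.tendsto_abs_meetVel hg, s.tendsto_abs_bounceVel hg⟩
  · have h0 := (s.bounceTime_pos k).le
    have h := (s.x₂_eq_iff hg hL hfper hgap h0).2 ⟨k, rfl⟩
    exact ⟨⟨h0, Or.inl h⟩, h⟩
  · have h0 := (s.meetTime_pos k).le
    have h := sup_eq_inf.2 ((s.bounceHeight_A_eq_B_iff (H := f s.a) hg h0).2 ⟨k, rfl⟩)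
    exact ⟨⟨h0, Or.inr h⟩, h⟩

/-- Theorem 3,2(a): for two balls of equal positive mass above a plate whose
motion `f` belongs to the class `𝒞` (there are `t₀` and a positive integer `K`
with `f'(t₀) = K·T·g/2`), there is a motion in which the post-collision speeds
of both balls tend to infinity.  Here `p i` enumerates the collisions of the
lower ball `P₂` with the plate (`V₂ i` the velocity just afterwards) and `q i`
enumerates the collisions of the upper ball `P₁` with `P₂` (`V₁ i` the velocity
of `P₁` just afterwards). -/
theorem equal_masses_both_velocities_tendsto_infinity
    (g T m : ℝ) (hg : 0 < g) (hT : 0 < T) (hm : 0 < m)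
    (f : ℝ → ℝ) (hf : ContDiff ℝ 1 f) (hfper : Function.Periodic f T)
    (hclass : ∃ t₀ : ℝ, ∃ K : ℕ, 0 < K ∧ deriv f t₀ = K * T * g / 2) :
    ∃ M : BouncingBallMotion g f m m, ∃ p q V₁ V₂ : ℕ → ℝ,
      StrictMono p ∧ StrictMono q ∧
      (∀ i : ℕ, p i ∈ M.coll ∧ M.x₂ (p i) = f (p i)) ∧
      (∀ i : ℕ, q i ∈ M.coll ∧ M.x₁ (q i) = M.x₂ (q i)) ∧
      (∀ t ∈ M.coll, M.x₂ t = f t → ∃ i : ℕ, p i = t) ∧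
      (∀ t ∈ M.coll, M.x₁ t = M.x₂ t → ∃ i : ℕ, q i = t) ∧
      (∀ i : ℕ, Tendsto M.v₂ (𝓝[>] (p i)) (𝓝 (V₂ i))) ∧
      (∀ i : ℕ, Tendsto M.v₁ (𝓝[>] (q i)) (𝓝 (V₁ i))) ∧
      Tendsto (fun i : ℕ => |V₁ i|) atTop atTop ∧
      Tendsto (fun i : ℕ => |V₂ i|) atTop atTop :=
  equal_masses_both_velocities_tendsto_infinity_general g T m hg hT f hf hfper hclass
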